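/- arXiv:1503.02482 — 2 statements merged into one kernel-verified Lean document; each statement's English description precedes it below -/
import Mathlib

section
/- Let (G,P,Δ) be a Garside group of finite type. Any positive subword of a positive absorbable element is absorbable: if a positive absorbable element y ∈ P can be written as a product y = uvw with u,v,w ∈ P (possibly u = 1 or w = 1), then v is absorbable. -/
/-- A Garside group of finite type: a group `G` (the group of fractions of its positive
monoid `P`), with a Garside element `Δ`, together with the associated data (left gcds,
infimum, supremum, distinguished coset representatives) satisfying the Garside axioms.
Here `u ≼ v` (prefix order) is encoded by `u⁻¹ * v ∈ P` and `u` being a suffix of `v`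
by `v * u⁻¹ ∈ P`. -/
structure GarsideGroup (G : Type*) [Group G] where
  /-- the positive monoid, viewed inside its group of fractions -/
  P : Submonoid G
  /-- the Garside element -/
  Δ : G
  delta_pos : Δ ∈ P
  /-- `G` is the group of fractions of `P` -/
  fractions : ∀ x : G, ∃ p ∈ P, ∃ q ∈ P, x = p⁻¹ * q
  /-- atomicity: the lengths of decompositions of a positive element into nontrivial
  positive factors are bounded -/
  atomic : ∀ p ∈ P, ∃ N : ℕ,
    ∀ l : List G, (∀ a ∈ l, a ∈ P ∧ a ≠ 1) → l.prod = p → l.length ≤ N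
  /-- left gcds for the prefix order -/
  lgcd : G → G → G
  lgcd_dvd_left : ∀ a b : G, (lgcd a b)⁻¹ * a ∈ P
  lgcd_dvd_right : ∀ a b : G, (lgcd a b)⁻¹ * b ∈ P
  lgcd_greatest : ∀ a b c : G, c⁻¹ * a ∈ P → c⁻¹ * b ∈ P → c⁻¹ * lgcd a b ∈ P
  /-- left lcms exist -/
  llcm_exists : ∀ a b : G, ∃ m : G, a⁻¹ * m ∈ P ∧ b⁻¹ * m ∈ P ∧
    ∀ c : G, a⁻¹ * c ∈ P → b⁻¹ * c ∈ P → m⁻¹ * c ∈ P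
  /-- right gcds exist -/
  rgcd_exists : ∀ a b : G, ∃ d : G, a * d⁻¹ ∈ P ∧ b * d⁻¹ ∈ P ∧
    ∀ c : G, a * c⁻¹ ∈ P → b * c⁻¹ ∈ P → d * c⁻¹ ∈ P
  /-- right lcms exist -/
  rlcm_exists : ∀ a b : G, ∃ m : G, m * a⁻¹ ∈ P ∧ m * b⁻¹ ∈ P ∧
    ∀ c : G, c * a⁻¹ ∈ P → c * b⁻¹ ∈ P → c * m⁻¹ ∈ P
  /-- the left divisors of `Δ` coincide with its right divisors (the simple elements) -/
  simples_symm : ∀ s : G, (s ∈ P ∧ s⁻¹ * Δ ∈ P) ↔ (s ∈ P ∧ Δ * s⁻¹ ∈ P)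
  /-- finite type: there are only finitely many simple elements -/
  simples_finite : {s : G | s ∈ P ∧ s⁻¹ * Δ ∈ P}.Finite
  /-- the simple elements generate `P` -/
  simples_generate : ∀ p ∈ P, p ∈ Submonoid.closure {s : G | s ∈ P ∧ s⁻¹ * Δ ∈ P}
  /-- the infimum: `ginf x = max { r : ℤ | Δ^r ≼ x }` -/
  ginf : G → ℤ
  ginf_dvd : ∀ x : G, (Δ ^ ginf x)⁻¹ * x ∈ P
  ginf_max : ∀ (x : G) (r : ℤ), (Δ ^ r)⁻¹ * x ∈ P → r ≤ ginf x
  /-- the supremum: `gsup x = min { s : ℤ | x ≼ Δ^s }` -/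
  gsup : G → ℤ
  gsup_dvd : ∀ x : G, x⁻¹ * Δ ^ gsup x ∈ P
  gsup_min : ∀ (x : G) (s : ℤ), x⁻¹ * Δ ^ s ∈ P → gsup x ≤ s
  /-- each coset `gΔ^ℤ` has a unique distinguished representative, of infimum `0` -/
  rep : G ⧸ Subgroup.zpowers Δ → G
  rep_mem : ∀ v : G ⧸ Subgroup.zpowers Δ,
    (QuotientGroup.mk (rep v) : G ⧸ Subgroup.zpowers Δ) = v
  rep_inf : ∀ v : G ⧸ Subgroup.zpowers Δ, ginf (rep v) = 0
  rep_eq : ∀ x : G, ginf x = 0 → rep (QuotientGroup.mk x) = x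

namespace GarsideGroup

variable {G : Type*} [Group G]

/-- the prefix order: `u ≼ v` -/
def LDvd (g : GarsideGroup G) (u v : G) : Prop := u⁻¹ * v ∈ g.P

/-- the suffix order: `u` is a suffix of `v` -/
def RDvd (g : GarsideGroup G) (u v : G) : Prop := v * u⁻¹ ∈ g.P

/-- simple elements: positive left divisors of `Δ` -/
def Simple (g : GarsideGroup G) (s : G) : Prop := s ∈ g.P ∧ g.LDvd s g.Δ

/-- atoms of the positive monoid -/
def Atom (g : GarsideGroup G) (a : G) : Prop :=
  a ∈ g.P ∧ a ≠ 1 ∧ ∀ u v : G, u ∈ g.P → v ∈ g.P → a = u * v → u = 1 ∨ v = 1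

/-- the canonical length `ℓ(x) = sup(x) - inf(x)` -/
def ell (g : GarsideGroup G) (x : G) : ℤ := g.gsup x - g.ginf x

/-- the (powers of the) inner automorphism `τ(x) = Δ⁻¹ x Δ`: `tau k x = Δ^{-k} x Δ^k` -/
def tau (g : GarsideGroup G) (k : ℤ) (x : G) : G := g.Δ ^ (-k) * x * g.Δ ^ k

/-- the right complement `∂y = y⁻¹ Δ^{sup y}` -/
def comp (g : GarsideGroup G) (y : G) : G := y⁻¹ * g.Δ ^ g.gsup y

/-- `x` absorbs `y` -/
def Absorbs (g : GarsideGroup G) (x y : G) : Prop :=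
  g.ginf (x * y) = g.ginf x ∧ g.gsup (x * y) = g.gsup x

/-- absorbable elements -/
def Absorbable (g : GarsideGroup G) (y : G) : Prop :=
  (g.ginf y = 0 ∨ g.gsup y = 0) ∧ ∃ x : G, g.Absorbs x y

end GarsideGroup

namespace GarsideGroup

variable {G₀ : Type*} [Group G₀] (g : GarsideGroup G₀)

lemma inv_mem_eq_one {p : G₀} (hp : p ∈ g.P) (hpi : p⁻¹ ∈ g.P) : p = 1 := by
  by_contra h
  obtain ⟨N, hN⟩ := g.atomic 1 (one_mem _)
  have hlen := hN (List.replicate (N + 1) p ++ List.replicate (N + 1) p⁻¹)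
    (by
      intro a ha
      rcases List.mem_append.mp ha with ha | ha <;>
        rw [List.eq_of_mem_replicate ha]
      · exact ⟨hp, h⟩
      · exact ⟨hpi, by simpa using h⟩)
    (by simp [List.prod_replicate, inv_pow])
  simp at hlen
  omega

lemma delta_zpow_mem {k : ℤ} (hk : 0 ≤ k) : g.Δ ^ k ∈ g.P := by
  lift k to ℕ using hk
  rw [zpow_natCast]
  exact pow_mem g.delta_pos k

lemma ginf_one_nonneg : 0 ≤ g.ginf 1 :=
  g.ginf_max 1 0 (by simpa using g.P.one_mem)

lemma delta_zpow_ne_one {k : ℤ} (hk : 0 < k) : g.Δ ^ k ≠ 1 := by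
  intro h
  have hm : ∀ m : ℤ, k * m ≤ g.ginf 1 := fun m =>
    g.ginf_max 1 (k * m) (by rw [zpow_mul, h]; simpa using g.P.one_mem)
  have h1 := hm (g.ginf 1 + 1)
  have h2 := g.ginf_one_nonneg
  have h3 : 1 * (g.ginf 1 + 1) ≤ k * (g.ginf 1 + 1) :=
    mul_le_mul_of_nonneg_right hk (by omega)
  omega

lemma ginf_one : g.ginf 1 = 0 := by
  refine le_antisymm ?_ g.ginf_one_nonneg
  by_contra h
  push_neg at h
  have h1 : (g.Δ ^ g.ginf 1)⁻¹ ∈ g.P := by simpa using g.ginf_dvd 1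
  have h2 : g.Δ ^ g.ginf 1 ∈ g.P := g.delta_zpow_mem (le_of_lt h)
  exact g.delta_zpow_ne_one h (g.inv_mem_eq_one h2 h1)

lemma ginf_mono {a b : G₀} (h : a⁻¹ * b ∈ g.P) : g.ginf a ≤ g.ginf b :=
  g.ginf_max b _ (by
    have := mul_mem (g.ginf_dvd a) h
    simpa [mul_assoc] using this)

lemma gsup_mono {a b : G₀} (h : a⁻¹ * b ∈ g.P) : g.gsup a ≤ g.gsup b :=
  g.gsup_min a _ (by
    have := mul_mem h (g.gsup_dvd b)
    simpa [mul_assoc] using this)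

lemma tau_mem {p : G₀} (hp : p ∈ g.P) : g.Δ⁻¹ * p * g.Δ ∈ g.P := by
  have key : Submonoid.closure {s : G₀ | s ∈ g.P ∧ s⁻¹ * g.Δ ∈ g.P} ≤
      g.P.comap (MulAut.conj g.Δ⁻¹).toMonoidHom := by
    rw [Submonoid.closure_le]
    rintro s ⟨hs, hsd⟩
    have hsym : g.Δ * (s⁻¹ * g.Δ)⁻¹ ∈ g.P := by
      have : g.Δ * (s⁻¹ * g.Δ)⁻¹ = s := by group
      rw [this]; exact hs
    have h1 : (s⁻¹ * g.Δ)⁻¹ * g.Δ ∈ g.P := ((g.simples_symm _).mpr ⟨hsd, hsym⟩).2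
    have h2 : (s⁻¹ * g.Δ)⁻¹ * g.Δ = g.Δ⁻¹ * s * g.Δ := by group
    show (MulAut.conj g.Δ⁻¹) s ∈ g.P
    rw [MulAut.conj_apply]
    rw [h2] at h1
    simpa using h1
  have := key (g.simples_generate p hp)
  have h3 : (MulAut.conj g.Δ⁻¹) p ∈ g.P := this
  rw [MulAut.conj_apply] at h3
  simpa using h3

lemma tau_pow_mem (n : ℕ) {p : G₀} (hp : p ∈ g.P) :
    (g.Δ ^ n)⁻¹ * p * g.Δ ^ n ∈ g.P := by
  induction n with
  | zero => simpa using hp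
  | succ m ih =>
    have h := g.tau_mem ih
    have heq : g.Δ⁻¹ * ((g.Δ ^ m)⁻¹ * p * g.Δ ^ m) * g.Δ
        = (g.Δ ^ (m + 1))⁻¹ * p * g.Δ ^ (m + 1) := by
      rw [pow_succ]; group
    rwa [heq] at h

end GarsideGroup

/-- Lemma 2.4: any positive subword of a positive absorbable element
is absorbable. -/
theorem GarsideGroup.absorbable_subword {G : Type*} [Group G] (g : GarsideGroup G)
    (y u v w : G) (hy : y ∈ g.P) (habs : g.Absorbable y)
    (hu : u ∈ g.P) (hv : v ∈ g.P) (hw : w ∈ g.P) (hyuvw : y = u * v * w) :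
    g.Absorbable v := by
  -- first, reduce to the case `ginf y = 0`
  have hy1 : g.ginf y = 0 := by
    rcases habs.1 with h | h
    · exact h
    · have hyi : y⁻¹ ∈ g.P := by
        have := g.gsup_dvd y
        rw [h] at this
        simpa using this
      rw [g.inv_mem_eq_one hy hyi]
      exact g.ginf_one
  have hvnn : 0 ≤ g.ginf v := g.ginf_max v 0 (by simpa using hv)
  have hvle : g.ginf v ≤ 0 := by
    have hmem : (g.Δ ^ g.ginf v)⁻¹ * y ∈ g.P := by
      obtain ⟨n, hn⟩ : ∃ n : ℕ, (n : ℤ) = g.ginf v :=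
        ⟨(g.ginf v).toNat, Int.toNat_of_nonneg hvnn⟩
      have h1 : (g.Δ ^ n)⁻¹ * u * g.Δ ^ n ∈ g.P := g.tau_pow_mem n hu
      have h2 : (g.Δ ^ n)⁻¹ * v ∈ g.P := by
        have := g.ginf_dvd v
        rwa [← hn, zpow_natCast] at this
      have h3 := mul_mem (mul_mem h1 h2) hw
      have heq : (g.Δ ^ n)⁻¹ * u * g.Δ ^ n * ((g.Δ ^ n)⁻¹ * v) * w
          = (g.Δ ^ n)⁻¹ * (u * v * w) := by group
      rw [heq] at h3
      rw [hyuvw, ← hn, zpow_natCast]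
      exact h3
    have := g.ginf_max y _ hmem
    omega
  obtain ⟨x, hxi, hxs⟩ := habs.2
  have d1 : x⁻¹ * (x * u) ∈ g.P := by
    have : x⁻¹ * (x * u) = u := by group
    rw [this]; exact hu
  have d2 : (x * u)⁻¹ * (x * u * v) ∈ g.P := by
    have : (x * u)⁻¹ * (x * u * v) = v := by group
    rw [this]; exact hv
  have d3 : (x * u * v)⁻¹ * (x * y) ∈ g.P := by
    have : (x * u * v)⁻¹ * (x * (u * v * w)) = w := by group
    rw [hyuvw, this]; exact hw
  have i1 := g.ginf_mono d1
  have i2 := g.ginf_mono d2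
  have i3 := g.ginf_mono d3
  have s1 := g.gsup_mono d1
  have s2 := g.gsup_mono d2
  have s3 := g.gsup_mono d3
  rw [hxi] at i3
  rw [hxs] at s3
  exact ⟨Or.inl (le_antisymm hvle hvnn), x * u, by omega, by omega⟩
end

section
/- Let (G,P,Δ) be a Garside group of finite type and let y ∈ G be an absorbable element of canonical length k = ℓ(y). Then there exists x ∈ G with inf(x) = 0 and sup(x) = k which absorbs y. Moreover, k is the smallest possible: every x ∈ G with inf(x) = 0 which absorbs y satisfies sup(x) ≥ k. -/
section Aux
namespace GarsideGroup

variable {G : Type*} [Group G] (g : GarsideGroup G)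

lemma conj_delta_mem {p : G} (hp : p ∈ g.P) : g.Δ * p * g.Δ⁻¹ ∈ g.P := by
  have h := g.simples_generate p hp
  clear hp
  induction h using Submonoid.closure_induction with
  | mem x hx =>
      obtain ⟨hx1, hx2⟩ := hx
      have h1 : g.Δ * x⁻¹ ∈ g.P := ((g.simples_symm x).mp ⟨hx1, hx2⟩).2
      have h2 : (g.Δ * x⁻¹)⁻¹ * g.Δ ∈ g.P := by
        have : (g.Δ * x⁻¹)⁻¹ * g.Δ = x := by group
        rw [this]; exact hx1
      have h3 := ((g.simples_symm (g.Δ * x⁻¹)).mp ⟨h1, h2⟩).2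
      have he : g.Δ * (g.Δ * x⁻¹)⁻¹ = g.Δ * x * g.Δ⁻¹ := by group
      rwa [he] at h3
  | one => simpa using g.P.one_mem
  | mul a b _ _ iha ihb =>
      have he : g.Δ * (a * b) * g.Δ⁻¹ = (g.Δ * a * g.Δ⁻¹) * (g.Δ * b * g.Δ⁻¹) := by group
      rw [he]; exact mul_mem iha ihb

lemma conj_delta_inv_mem {p : G} (hp : p ∈ g.P) : g.Δ⁻¹ * p * g.Δ ∈ g.P := by
  have h := g.simples_generate p hp
  clear hp
  induction h using Submonoid.closure_induction with
  | mem x hx =>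
      obtain ⟨hx1, hx2⟩ := hx
      have h1 : x⁻¹ * g.Δ ∈ g.P := hx2
      have h2 : g.Δ * (x⁻¹ * g.Δ)⁻¹ ∈ g.P := by
        have : g.Δ * (x⁻¹ * g.Δ)⁻¹ = x := by group
        rw [this]; exact hx1
      have h3 := ((g.simples_symm (x⁻¹ * g.Δ)).mpr ⟨h1, h2⟩).2
      have he : (x⁻¹ * g.Δ)⁻¹ * g.Δ = g.Δ⁻¹ * x * g.Δ := by group
      rwa [he] at h3
  | one => simpa using g.P.one_mem
  | mul a b _ _ iha ihb =>
      have he : g.Δ⁻¹ * (a * b) * g.Δ = (g.Δ⁻¹ * a * g.Δ) * (g.Δ⁻¹ * b * g.Δ) := by group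
      rw [he]; exact mul_mem iha ihb

lemma conj_mem (m : ℤ) {p : G} (hp : p ∈ g.P) : g.Δ ^ m * p * g.Δ ^ (-m) ∈ g.P := by
  induction m using Int.induction_on with
  | zero => simpa using hp
  | succ n ih =>
      have he : g.Δ ^ ((n : ℤ) + 1) * p * g.Δ ^ (-((n : ℤ) + 1)) =
          g.Δ * (g.Δ ^ (n : ℤ) * p * g.Δ ^ (-(n : ℤ))) * g.Δ⁻¹ := by group
      rw [he]; exact g.conj_delta_mem ih
  | pred n ih =>
      have he : g.Δ ^ (-(n : ℤ) - 1) * p * g.Δ ^ (-(-(n : ℤ) - 1)) =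
          g.Δ⁻¹ * (g.Δ ^ (-(n : ℤ)) * p * g.Δ ^ (-(-(n : ℤ)))) * g.Δ := by group
      rw [he]; exact g.conj_delta_inv_mem ih

lemma zpow_nonneg_mem {m : ℤ} (hm : 0 ≤ m) : g.Δ ^ m ∈ g.P := by
  lift m to ℕ using hm
  rw [zpow_natCast]
  exact pow_mem g.delta_pos m

lemma ginf_le_dvd (x : G) {r : ℤ} (h : r ≤ g.ginf x) : (g.Δ ^ r)⁻¹ * x ∈ g.P := by
  have h1 := g.ginf_dvd x
  have key : (g.Δ ^ r)⁻¹ * x = g.Δ ^ (g.ginf x - r) * ((g.Δ ^ g.ginf x)⁻¹ * x) := by group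
  rw [key]
  exact mul_mem (g.zpow_nonneg_mem (by omega)) h1

lemma dvd_of_le_gsup (x : G) {s : ℤ} (h : g.gsup x ≤ s) : x⁻¹ * g.Δ ^ s ∈ g.P := by
  have h1 := g.gsup_dvd x
  have key : x⁻¹ * g.Δ ^ s = (x⁻¹ * g.Δ ^ g.gsup x) * g.Δ ^ (s - g.gsup x) := by group
  rw [key]
  exact mul_mem h1 (g.zpow_nonneg_mem (by omega))

lemma mem_P_of_ginf {x : G} (h : g.ginf x = 0) : x ∈ g.P := by
  have := g.ginf_dvd x
  rw [h] at this
  simpa using this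

lemma ginf_nonneg_of_mem {x : G} (hx : x ∈ g.P) : 0 ≤ g.ginf x :=
  g.ginf_max x 0 (by simpa using hx)

lemma gsup_inv (x : G) : g.gsup x⁻¹ = -g.ginf x := by
  have h1 : g.gsup x⁻¹ ≤ -g.ginf x := by
    apply g.gsup_min
    have h2 := g.conj_mem (g.ginf x) (g.ginf_dvd x)
    have key : x⁻¹⁻¹ * g.Δ ^ (-g.ginf x) =
        g.Δ ^ g.ginf x * ((g.Δ ^ g.ginf x)⁻¹ * x) * g.Δ ^ (-g.ginf x) := by group
    rw [key]; exact h2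
  have h2 : -g.gsup x⁻¹ ≤ g.ginf x := by
    apply g.ginf_max
    have h3 := g.conj_mem (g.gsup x⁻¹) (g.gsup_dvd x⁻¹)
    have key : (g.Δ ^ (-g.gsup x⁻¹))⁻¹ * x =
        g.Δ ^ g.gsup x⁻¹ * (x⁻¹⁻¹ * g.Δ ^ g.gsup x⁻¹) * g.Δ ^ (-g.gsup x⁻¹) := by group
    rw [key]; exact h3
  omega

lemma ginf_inv (x : G) : g.ginf x⁻¹ = -g.gsup x := by
  have := g.gsup_inv x⁻¹
  rw [inv_inv] at this
  omega

lemma gsup_mul_le (u v : G) : g.gsup (u * v) ≤ g.gsup u + g.gsup v := by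
  apply g.gsup_min
  have h1 := g.gsup_dvd v
  have h2 := g.conj_mem (-g.gsup v) (g.gsup_dvd u)
  have key : (u * v)⁻¹ * g.Δ ^ (g.gsup u + g.gsup v) =
      (v⁻¹ * g.Δ ^ g.gsup v) *
        (g.Δ ^ (-g.gsup v) * (u⁻¹ * g.Δ ^ g.gsup u) * g.Δ ^ (-(-g.gsup v))) := by group
  rw [key]; exact mul_mem h1 h2

lemma le_ginf_mul (u v : G) : g.ginf u + g.ginf v ≤ g.ginf (u * v) := by
  apply g.ginf_max
  have h1 := g.ginf_dvd v
  have h2 := g.conj_mem (-g.ginf v) (g.ginf_dvd u)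
  have key : (g.Δ ^ (g.ginf u + g.ginf v))⁻¹ * (u * v) =
      (g.Δ ^ (-g.ginf v) * ((g.Δ ^ g.ginf u)⁻¹ * u) * g.Δ ^ (-(-g.ginf v))) *
        ((g.Δ ^ g.ginf v)⁻¹ * v) := by group
  rw [key]; exact mul_mem h2 h1

lemma inf_add_gsup_le (u v : G) : g.ginf u + g.gsup v ≤ g.gsup (u * v) := by
  have h := g.gsup_mul_le u⁻¹ (u * v)
  rw [inv_mul_cancel_left, g.gsup_inv] at h
  omega

lemma gsup_add_inf_le (u v : G) : g.gsup u + g.ginf v ≤ g.gsup (u * v) := by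
  have h := g.gsup_mul_le (u * v) v⁻¹
  rw [mul_inv_cancel_right, g.gsup_inv] at h
  omega

lemma ginf_zpow_mul (m : ℤ) (x : G) : g.ginf (g.Δ ^ m * x) = m + g.ginf x := by
  have h1 : m + g.ginf x ≤ g.ginf (g.Δ ^ m * x) := by
    apply g.ginf_max
    have key : (g.Δ ^ (m + g.ginf x))⁻¹ * (g.Δ ^ m * x) = (g.Δ ^ g.ginf x)⁻¹ * x := by group
    rw [key]; exact g.ginf_dvd x
  have h2 : g.ginf (g.Δ ^ m * x) - m ≤ g.ginf x := by
    apply g.ginf_max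
    have key : (g.Δ ^ (g.ginf (g.Δ ^ m * x) - m))⁻¹ * x =
        (g.Δ ^ g.ginf (g.Δ ^ m * x))⁻¹ * (g.Δ ^ m * x) := by group
    rw [key]; exact g.ginf_dvd _
  omega

lemma gsup_zpow_mul (m : ℤ) (x : G) : g.gsup (g.Δ ^ m * x) = m + g.gsup x := by
  have h1 : g.gsup (g.Δ ^ m * x) ≤ m + g.gsup x := by
    apply g.gsup_min
    have key : (g.Δ ^ m * x)⁻¹ * g.Δ ^ (m + g.gsup x) = x⁻¹ * g.Δ ^ g.gsup x := by group
    rw [key]; exact g.gsup_dvd x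
  have h2 : g.gsup x ≤ g.gsup (g.Δ ^ m * x) - m := by
    apply g.gsup_min
    have key : x⁻¹ * g.Δ ^ (g.gsup (g.Δ ^ m * x) - m) =
        (g.Δ ^ m * x)⁻¹ * g.Δ ^ g.gsup (g.Δ ^ m * x) := by group
    rw [key]; exact g.gsup_dvd _
  omega

/-- right translation of the left gcd by a power of `Δ` -/
lemma lgcd_mul_zpow_dvd (a b c : G) (m : ℤ)
    (h1 : c⁻¹ * (a * g.Δ ^ m) ∈ g.P) (h2 : c⁻¹ * (b * g.Δ ^ m) ∈ g.P) :
    c⁻¹ * (g.lgcd a b * g.Δ ^ m) ∈ g.P := by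
  have e1 : (c * g.Δ ^ (-m))⁻¹ * a = g.Δ ^ m * (c⁻¹ * (a * g.Δ ^ m)) * g.Δ ^ (-m) := by group
  have e2 : (c * g.Δ ^ (-m))⁻¹ * b = g.Δ ^ m * (c⁻¹ * (b * g.Δ ^ m)) * g.Δ ^ (-m) := by group
  have h1' : (c * g.Δ ^ (-m))⁻¹ * a ∈ g.P := by rw [e1]; exact g.conj_mem m h1
  have h2' : (c * g.Δ ^ (-m))⁻¹ * b ∈ g.P := by rw [e2]; exact g.conj_mem m h2
  have h3 := g.lgcd_greatest a b (c * g.Δ ^ (-m)) h1' h2'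
  have e3 : c⁻¹ * (g.lgcd a b * g.Δ ^ m) =
      g.Δ ^ (-m) * ((c * g.Δ ^ (-m))⁻¹ * g.lgcd a b) * g.Δ ^ (-(-m)) := by group
  rw [e3]; exact g.conj_mem (-m) h3

/-- the core construction, for `y` with `inf y = 0` -/
lemma exists_absorber_aux (y : G) (hyi : g.ginf y = 0) (hex : ∃ x : G, g.Absorbs x y) :
    ∃ x : G, g.ginf x = 0 ∧ g.gsup x = g.ell y ∧ g.Absorbs x y := by
  obtain ⟨x₀, h₀i, h₀s⟩ := hex
  set x : G := g.Δ ^ (-g.ginf x₀) * x₀ with hx_def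
  have hxi : g.ginf x = 0 := by rw [hx_def, g.ginf_zpow_mul]; omega
  have hxyi : g.ginf (x * y) = 0 := by
    rw [hx_def, mul_assoc, g.ginf_zpow_mul, h₀i]; omega
  have hxys : g.gsup (x * y) = g.gsup x := by
    rw [hx_def, mul_assoc, g.gsup_zpow_mul, g.gsup_zpow_mul, h₀s]
  set s : ℤ := g.gsup x with hs_def
  set k : ℤ := g.gsup y with hk_def
  have hell : g.ell y = k := by simp [GarsideGroup.ell, hyi, hk_def]
  have hsk : k ≤ s := by
    have h := g.inf_add_gsup_le x y
    omega
  have hxP : x ∈ g.P := g.mem_P_of_ginf hxi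
  have hyP : y ∈ g.P := g.mem_P_of_ginf hyi
  set h : G := g.lgcd x (g.Δ ^ (s - k)) with hh_def
  have hhP : h ∈ g.P := by
    have := g.lgcd_greatest x (g.Δ ^ (s - k)) 1 (by simpa using hxP)
      (by simpa using g.zpow_nonneg_mem (show (0:ℤ) ≤ s - k by omega))
    simpa using this
  set z : G := h⁻¹ * x with hz_def
  have hzP : z ∈ g.P := g.lgcd_dvd_left _ _
  have hhs : g.gsup h ≤ s - k := g.gsup_min _ _ (g.lgcd_dvd_right x _)
  -- the key divisibility: x*y ≼ h * Δ^k
  have crux : (x * y)⁻¹ * (h * g.Δ ^ k) ∈ g.P := by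
    apply g.lgcd_mul_zpow_dvd x (g.Δ ^ (s - k)) (x * y) k
    · have e : (x * y)⁻¹ * (x * g.Δ ^ k) = y⁻¹ * g.Δ ^ k := by group
      rw [e]; exact g.dvd_of_le_gsup y le_rfl
    · have e : (x * y)⁻¹ * (g.Δ ^ (s - k) * g.Δ ^ k) = (x * y)⁻¹ * g.Δ ^ s := by
        rw [← zpow_add]; ring_nf
      rw [e]; exact g.dvd_of_le_gsup (x * y) (by omega)
  have hxhz : x = h * z := by rw [hz_def]; group
  have hxyhz : x * y = h * (z * y) := by rw [hz_def]; group
  -- gsup (z*y) ≤ k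
  have hzys_le : g.gsup (z * y) ≤ k := by
    apply g.gsup_min
    have e : (z * y)⁻¹ * g.Δ ^ k = (x * y)⁻¹ * (h * g.Δ ^ k) := by rw [hz_def]; group
    rw [e]; exact crux
  -- ginf z = 0
  have hzi : g.ginf z = 0 := by
    have hge : 0 ≤ g.ginf z := g.ginf_nonneg_of_mem hzP
    by_contra hne
    have h1 : (g.Δ ^ (1 : ℤ))⁻¹ * z ∈ g.P := g.ginf_le_dvd z (by omega)
    have h2 := g.conj_mem (-1) hhP
    have e : (g.Δ ^ (1 : ℤ))⁻¹ * x =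
        (g.Δ ^ (-1 : ℤ) * h * g.Δ ^ (-(-1) : ℤ)) * ((g.Δ ^ (1 : ℤ))⁻¹ * z) := by
      rw [hz_def]; group
    have h3 : (g.Δ ^ (1 : ℤ))⁻¹ * x ∈ g.P := by rw [e]; exact mul_mem h2 h1
    have := g.ginf_max x 1 h3
    omega
  -- ginf (z*y) = 0
  have hzyi : g.ginf (z * y) = 0 := by
    have hge : 0 ≤ g.ginf (z * y) := g.ginf_nonneg_of_mem (mul_mem hzP hyP)
    by_contra hne
    have h1 : (g.Δ ^ (1 : ℤ))⁻¹ * (z * y) ∈ g.P := g.ginf_le_dvd _ (by omega)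
    have h2 := g.conj_mem (-1) hhP
    have e : (g.Δ ^ (1 : ℤ))⁻¹ * (x * y) =
        (g.Δ ^ (-1 : ℤ) * h * g.Δ ^ (-(-1) : ℤ)) * ((g.Δ ^ (1 : ℤ))⁻¹ * (z * y)) := by
      rw [hz_def]; group
    have h3 : (g.Δ ^ (1 : ℤ))⁻¹ * (x * y) ∈ g.P := by rw [e]; exact mul_mem h2 h1
    have := g.ginf_max (x * y) 1 h3
    omega
  -- k ≤ gsup z
  have hzs_ge : k ≤ g.gsup z := by
    have h1 := g.gsup_mul_le h z
    rw [← hxhz] at h1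
    omega
  -- gsup z ≤ gsup (z * y)
  have hzs_le : g.gsup z ≤ g.gsup (z * y) := by
    have h1 := g.gsup_add_inf_le z y
    omega
  refine ⟨z, hzi, by omega, ?_, by omega⟩
  omega

end GarsideGroup
end Aux

theorem GarsideGroup.absorbable_by_length' {G : Type*} [Group G] (g : GarsideGroup G)
    (y : G) (hy : g.Absorbable y) :
    (∃ x : G, g.ginf x = 0 ∧ g.gsup x = g.ell y ∧ g.Absorbs x y) ∧
    (∀ x : G, g.ginf x = 0 → g.Absorbs x y → g.ell y ≤ g.gsup x) := by
  obtain ⟨hy0, x₀, hx₀⟩ := hy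
  constructor
  · -- existence
    rcases hy0 with hyi | hys
    · exact g.exists_absorber_aux y hyi ⟨x₀, hx₀⟩
    · -- sup y = 0 : pass to y⁻¹
      have hyi' : g.ginf y⁻¹ = 0 := by rw [g.ginf_inv]; omega
      have habs' : g.Absorbs (x₀ * y) y⁻¹ := by
        constructor
        · rw [mul_inv_cancel_right, hx₀.1]
        · rw [mul_inv_cancel_right, hx₀.2]
      obtain ⟨z', hz'i, hz's, hz'a⟩ := g.exists_absorber_aux y⁻¹ hyi' ⟨x₀ * y, habs'⟩
      have hell : g.ell y⁻¹ = g.ell y := by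
        have h1 := g.ginf_inv y
        have h2 := g.gsup_inv y
        simp only [GarsideGroup.ell]
        omega
      refine ⟨z' * y⁻¹, ?_, ?_, ?_, ?_⟩
      · rw [hz'a.1, hz'i]
      · rw [hz'a.2, hz's, hell]
      · rw [inv_mul_cancel_right, hz'a.1, hz'i]
      · rw [inv_mul_cancel_right, hz'a.2, hz's, hell]
  · -- minimality
    intro x hx0 hxa
    rcases hy0 with hyi | hys
    · have h1 := g.inf_add_gsup_le x y
      rw [hx0, hxa.2] at h1
      simp only [GarsideGroup.ell]
      omega
    · have h1 := g.le_ginf_mul x⁻¹ (x * y)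
      rw [inv_mul_cancel_left, g.ginf_inv, hxa.1, hx0] at h1
      simp only [GarsideGroup.ell]
      omega

/-- Lemma 2.5: an absorbable element `y` of canonical length `k` can be
absorbed by some `x` with `inf x = 0` and `sup x = k`; moreover `k` is the smallest
possible supremum of an absorbing element of infimum `0`. -/
theorem GarsideGroup.absorbable_by_length {G : Type*} [Group G] (g : GarsideGroup G)
    (y : G) (hy : g.Absorbable y) :
    (∃ x : G, g.ginf x = 0 ∧ g.gsup x = g.ell y ∧ g.Absorbs x y) ∧
    (∀ x : G, g.ginf x = 0 → g.Absorbs x y → g.ell y ≤ g.gsup x) := by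
  exact g.absorbable_by_length' y hy
end
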